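/- Consider the k-planted REM with parameters (μ̂ log M, σ̂ √(log M / 2), M, k) where k ≤ M^α for a constant 0 < α < 1. If γ = μ̂/σ̂ > 1 + √α, then the ML estimator (the set of top-k weights) recovers the planted set with probability 1 − o(1); if γ < 1, recovery fails with probability 1 − o(1). -/

import Mathlib

/-!
Write `γ = μ̂ / σ̂`. Recovery: fix a threshold `t = c σ̂ log M` with `1 < c < γ - √α`. Recovery can
only fail if some planted weight lies below `t` or some unbiased weight above it; Gaussian Chernoff
bounds and a union bound make this at most `k M^{-(γ-c)²} + M^{1-c²} ≤ M^{α-(γ-c)²} + M^{1-c²} → 0`.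

Failure: fix `γ < c < 1`. Recovery forces the first planted weight above `t` (probability at most
`M^{-(c-γ)²}`) or all `M` unbiased weights below `t` (probability `(1 - p)^M ≤ exp (-M p)`).
Bounding the tail `p` from below by the density at `t + 1` gives `M p ≳ M^{1-c²} / log M → ∞`.
-/

open Real Filter MeasureTheory ProbabilityTheory Set
open scoped NNReal

/-- Probability, in the `k`-planted REM with parameters
`(μ̂ log M, σ̂ √(log M/2), M, k)` (planted set = first `k` indices, w.l.o.g. by
symmetry), that every planted weight exceeds every unbiased weight, i.e. that
the top-`k` (ML) estimator recovers the planted set. -/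
noncomputable def kpremSuccess (μHat σHat : ℝ) (k M : ℕ) : ℝ :=
  ((MeasureTheory.Measure.pi fun i : Fin (M + k) =>
      ProbabilityTheory.gaussianReal (if (i : ℕ) < k then μHat * Real.log M else 0)
        (Real.toNNReal (σHat ^ 2 * Real.log M / 2)))
    {E : Fin (M + k) → ℝ | ∀ i j : Fin (M + k),
      (i : ℕ) < k → k ≤ (j : ℕ) → E j < E i}).toReal

namespace ProbabilityTheory

lemma hasSubgaussianMGF_of_map_eq_gaussianReal {Ω : Type*} {mΩ : MeasurableSpace Ω}
    {μ : Measure Ω} {X : Ω → ℝ} {v : ℝ≥0} (hX : μ.map X = gaussianReal 0 v) :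
    HasSubgaussianMGF X v μ where
  integrable_exp_mul t := by
    have hXm : AEMeasurable X μ := aemeasurable_of_map_neZero (by rw [hX]; infer_instance)
    have h := integrable_exp_mul_gaussianReal (μ := 0) (v := v) t
    rw [← hX] at h
    exact (integrable_map_measure (by fun_prop) hXm).1 h
  mgf_le t := by rw [mgf_gaussianReal hX]; simp

lemma gaussianReal_real_Ici_le {m t : ℝ} {v : ℝ≥0} (hmt : m ≤ t) :
    (gaussianReal m v).real (Ici t) ≤ exp (-(t - m) ^ 2 / (2 * v)) :=
  (hasSubgaussianMGF_of_map_eq_gaussianReal (X := (· - m))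
    (by rw [gaussianReal_map_sub_const, sub_self])).measure_ge_le (sub_nonneg.2 hmt)
    |>.trans_eq' (by congr 1; ext x; simp)

lemma gaussianReal_real_Iic_le {m t : ℝ} {v : ℝ≥0} (htm : t ≤ m) :
    (gaussianReal m v).real (Iic t) ≤ exp (-(m - t) ^ 2 / (2 * v)) :=
  (hasSubgaussianMGF_of_map_eq_gaussianReal (X := (m - ·))
    (by rw [gaussianReal_map_const_sub, sub_self])).measure_ge_le (sub_nonneg.2 htm)
    |>.trans_eq' (by congr 1; ext x; simp only [mem_Iic, mem_ofPred_eq, sub_le_sub_iff_left])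

lemma gaussianPDFReal_add_one_le_gaussianReal_real_Ioi {t : ℝ} {v : ℝ≥0} (hv : v ≠ 0)
    (ht : 0 ≤ t) : gaussianPDFReal 0 v (t + 1) ≤ (gaussianReal 0 v).real (Ioi t) := by
  rw [measureReal_def, gaussianReal_apply_eq_integral 0 hv,
    ENNReal.toReal_ofReal
      (setIntegral_nonneg measurableSet_Ioi fun x _ ↦ gaussianPDFReal_nonneg 0 v x)]
  have hpdf : ∀ x ∈ Ioc t (t + 1), gaussianPDFReal 0 v (t + 1) ≤ gaussianPDFReal 0 v x := by
    intro x hx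
    unfold gaussianPDFReal
    gcongr
    · linarith [hx.1]
    · exact hx.2
  calc gaussianPDFReal 0 v (t + 1)
      ≤ ∫ x in Ioc t (t + 1), gaussianPDFReal 0 v x := by
        simpa using setIntegral_ge_of_const_le measurableSet_Ioc (by simp) hpdf
          (integrable_gaussianPDFReal 0 v).integrableOn
    _ ≤ ∫ x in Ioi t, gaussianPDFReal 0 v x :=
        setIntegral_mono_set (integrable_gaussianPDFReal 0 v).integrableOn
          (.of_forall (gaussianPDFReal_nonneg 0 v)) (.of_forall fun _ hx ↦ hx.1)

end ProbabilityTheory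

namespace MeasureTheory.Measure

variable {ι : Type*} [Fintype ι] (μ : ι → Measure ℝ) [∀ i, IsProbabilityMeasure (μ i)]

lemma pi_real_eval_preimage (i : ι) {s : Set ℝ} (hs : MeasurableSet s) :
    (Measure.pi μ).real {x | x i ∈ s} = (μ i).real s :=
  (measurePreserving_eval μ i).measureReal_preimage hs.nullMeasurableSet

lemma pi_real_forall_mem (q : ι → Prop) [DecidablePred q] (s : Set ℝ) :
    (Measure.pi μ).real {x | ∀ j, q j → x j ∈ s} = ∏ j with q j, (μ j).real s := by
  have : {x : ι → ℝ | ∀ j, q j → x j ∈ s} = univ.pi fun j ↦ if q j then s else univ := by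
    ext x
    simp only [mem_ofPred_eq, Set.mem_pi, mem_univ, true_implies]
    exact forall_congr' fun j ↦ by split_ifs <;> simp [*]
  rw [this, measureReal_def, pi_pi, ENNReal.toReal_prod, Finset.prod_filter]
  exact Finset.prod_congr rfl fun j _ ↦ by split_ifs <;> simp [measureReal_def]

variable (p q : ι → Prop) [DecidablePred q] (t : ℝ)

lemma one_sub_le_pi_real_forall_lt [DecidablePred p] :
    1 - (∑ i with p i, (μ i).real (Iic t) + ∑ j with q j, (μ j).real (Ici t))
      ≤ (Measure.pi μ).real {x | ∀ i j, p i → q j → x j < x i} := by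
  set S := {x : ι → ℝ | ∀ i j, p i → q j → x j < x i}
  have hcover : univ ⊆ S ∪ (⋃ i ∈ ({i | p i} : Finset ι), {x | x i ∈ Iic t}) ∪
      ⋃ j ∈ ({j | q j} : Finset ι), {x | x j ∈ Ici t} := by
    intro x _
    by_cases hx : x ∈ S
    · exact Or.inl (Or.inl hx)
    obtain ⟨i, j, hi, hj, hji⟩ : ∃ i j, p i ∧ q j ∧ x i ≤ x j := by simpa [S] using hx
    by_cases hit : x i ≤ t
    · exact Or.inl (Or.inr (mem_biUnion (by simpa using hi) hit))
    · exact Or.inr (mem_biUnion (by simpa using hj) ((not_le.1 hit).le.trans hji))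
  have hunion := calc
    (1 : ℝ) = (Measure.pi μ).real univ := probReal_univ.symm
    _ ≤ _ := measureReal_mono hcover
    _ ≤ _ := (measureReal_union_le _ _).trans (add_le_add_left (measureReal_union_le _ _) _)
  have hlow := measureReal_biUnion_finset_le (μ := Measure.pi μ) {i | p i}
    fun i ↦ {x : ι → ℝ | x i ∈ Iic t}
  have hhigh := measureReal_biUnion_finset_le (μ := Measure.pi μ) {j | q j}
    fun j ↦ {x : ι → ℝ | x j ∈ Ici t}
  simp only [pi_real_eval_preimage μ _ measurableSet_Iic,
    pi_real_eval_preimage μ _ measurableSet_Ici] at hlow hhigh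
  linarith

lemma pi_real_forall_lt_le {i₀ : ι} (hi₀ : p i₀) :
    (Measure.pi μ).real {x | ∀ i j, p i → q j → x j < x i}
      ≤ (μ i₀).real (Ioi t) + ∏ j with q j, (μ j).real (Iic t) := by
  have hcover : {x : ι → ℝ | ∀ i j, p i → q j → x j < x i}
      ⊆ {x | x i₀ ∈ Ioi t} ∪ {x | ∀ j, q j → x j ∈ Iic t} := by
    intro x hx
    by_cases h : t < x i₀
    · exact Or.inl h
    · exact Or.inr fun j hj ↦ (hx i₀ j hi₀ hj).le.trans (not_lt.1 h)
  calc _ ≤ _ := measureReal_mono hcover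
    _ ≤ _ := measureReal_union_le _ _
    _ = _ := by rw [pi_real_eval_preimage μ i₀ measurableSet_Ioi, pi_real_forall_mem]

end MeasureTheory.Measure

open MeasureTheory.Measure Finset

lemma Fin.card_filter_le_val (M k : ℕ) : #{j : Fin (M + k) | k ≤ (j : ℕ)} = M := by
  have h := card_filter_add_card_filter_not (s := univ) fun j : Fin (M + k) ↦ (j : ℕ) < k
  simp only [Fin.card_filter_val_lt, not_lt, card_univ, Fintype.card_fin] at h
  omega

lemma exp_neg_sq_mul_log_div_eq_rpow {σ : ℝ} (hσ : σ ≠ 0) (a : ℝ) {M : ℕ} (hM : 0 < M) :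
    exp (-(a * σ * log M) ^ 2 / (σ ^ 2 * log M)) = (M : ℝ) ^ (-a ^ 2) := by
  rw [rpow_def_of_pos (by exact_mod_cast hM)]
  congr 1
  rcases eq_or_ne (log M) 0 with hL | hL
  · simp [hL]
  · field_simp

lemma tendsto_natCast_rpow_atTop_zero {y : ℝ} (hy : y < 0) :
    Tendsto (fun M : ℕ ↦ (M : ℝ) ^ y) atTop (nhds 0) := by
  have h := (tendsto_rpow_neg_atTop (neg_pos.2 hy)).comp tendsto_natCast_atTop_atTop
  simpa only [neg_neg, Function.comp_def] using h

section kpremSuccess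

variable {μHat σHat t c : ℝ} {k M : ℕ}

lemma two_mul_coe_toNNReal_variance :
    2 * ((σHat ^ 2 * log M / 2).toNNReal : ℝ) = σHat ^ 2 * log M := by
  rw [coe_toNNReal _ (by positivity)]
  ring

lemma one_sub_le_kpremSuccess (ht : 0 ≤ t) (htμ : t ≤ μHat * log M) :
    1 - (k * exp (-(μHat * log M - t) ^ 2 / (σHat ^ 2 * log M))
        + M * exp (-t ^ 2 / (σHat ^ 2 * log M)))
      ≤ kpremSuccess μHat σHat k M := by
  refine le_trans ?_ (one_sub_le_pi_real_forall_lt _ (fun i : Fin (M + k) ↦ (i : ℕ) < k)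
    (fun j ↦ k ≤ (j : ℕ)) t)
  gcongr
  · refine (sum_le_card_nsmul _ _ _ fun i hi ↦ ?_).trans_eq
      (by rw [Fin.card_filter_val_lt, min_eq_right (by omega), nsmul_eq_mul])
    rw [if_pos (mem_filter.1 hi).2]
    exact (gaussianReal_real_Iic_le htμ).trans_eq (by rw [two_mul_coe_toNNReal_variance])
  · refine (sum_le_card_nsmul _ _ _ fun j hj ↦ ?_).trans_eq
      (by rw [Fin.card_filter_le_val, nsmul_eq_mul])
    rw [if_neg (not_lt.2 (mem_filter.1 hj).2)]
    exact (gaussianReal_real_Ici_le ht).trans_eq (by rw [sub_zero, two_mul_coe_toNNReal_variance])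

lemma kpremSuccess_le (hk : 0 < k) (hμt : μHat * log M ≤ t) :
    kpremSuccess μHat σHat k M
      ≤ exp (-(t - μHat * log M) ^ 2 / (σHat ^ 2 * log M))
        + (1 - (gaussianReal 0 (σHat ^ 2 * log M / 2).toNNReal).real (Ioi t)) ^ M := by
  refine (pi_real_forall_lt_le _ (fun i : Fin (M + k) ↦ (i : ℕ) < k)
    (fun j ↦ k ≤ (j : ℕ)) t (i₀ := ⟨0, by omega⟩) hk).trans ?_
  gcongr
  · simp only [hk, if_true]
    exact (measureReal_mono Set.Ioi_subset_Ici_self).trans <|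
      (gaussianReal_real_Ici_le hμt).trans_eq (by rw [two_mul_coe_toNNReal_variance])
  · rw [prod_congr rfl fun j hj ↦ by rw [if_neg (not_lt.2 (mem_filter.1 hj).2)],
      prod_const, Fin.card_filter_le_val, ← compl_Ioi, probReal_compl_eq_one_sub measurableSet_Ioi]

lemma one_sub_rpow_le_kpremSuccess (hσ : 0 < σHat) (hc : 0 ≤ c) (hcγ : c ≤ μHat / σHat)
    (hM : 0 < M) :
    1 - (k * (M : ℝ) ^ (-(μHat / σHat - c) ^ 2) + (M : ℝ) ^ (1 - c ^ 2))
      ≤ kpremSuccess μHat σHat k M := by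
  have hcσ : c * σHat ≤ μHat := (le_div_iff₀ hσ).1 hcγ
  have h := one_sub_le_kpremSuccess (μHat := μHat) (σHat := σHat) (k := k) (by positivity)
    (mul_le_mul_of_nonneg_right hcσ (log_natCast_nonneg M))
  rw [show μHat * log M - c * σHat * log M = (μHat / σHat - c) * σHat * log M by
      field_simp, exp_neg_sq_mul_log_div_eq_rpow hσ.ne' _ hM,
    exp_neg_sq_mul_log_div_eq_rpow hσ.ne' _ hM] at h
  rwa [sub_eq_add_neg (1 : ℝ) (c ^ 2), rpow_add (by exact_mod_cast hM), rpow_one]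

lemma kpremSuccess_le_rpow (hk : 0 < k) (hσ : 0 < σHat) (hγc : μHat / σHat ≤ c) (hM : 0 < M) :
    kpremSuccess μHat σHat k M ≤ (M : ℝ) ^ (-(c - μHat / σHat) ^ 2)
      + (1 - (gaussianReal 0 (σHat ^ 2 * log M / 2).toNNReal).real
          (Ioi (c * σHat * log M))) ^ M := by
  have hσc : μHat ≤ c * σHat := (div_le_iff₀ hσ).1 hγc
  have h := kpremSuccess_le (σHat := σHat) hk
    (mul_le_mul_of_nonneg_right hσc (log_natCast_nonneg M))
  rwa [show c * σHat * log M - μHat * log M = (c - μHat / σHat) * σHat * log M by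
      field_simp, exp_neg_sq_mul_log_div_eq_rpow hσ.ne' _ hM] at h

end kpremSuccess

lemma tendsto_exp_mul_gaussianPDFReal_atTop {σ c : ℝ} (hσ : 0 < σ) (hc : c ^ 2 < 1) :
    Tendsto (fun L ↦ exp L * gaussianPDFReal 0 (σ ^ 2 * L / 2).toNNReal (c * σ * L + 1))
      atTop atTop := by
  -- for `L ≥ 1` use `√L ≤ L` and `1 / (σ² L) ≤ 1 / σ²` in the density
  set K := exp (-(2 * c / σ + 1 / σ ^ 2)) / √(π * σ ^ 2)
  have hK : 0 < K := by positivity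
  have hlim : Tendsto (fun L ↦ K * (exp ((1 - c ^ 2) * L) / L ^ (1 : ℝ))) atTop atTop :=
    (tendsto_exp_mul_div_rpow_atTop 1 _ (by linarith)).const_mul_atTop hK
  refine tendsto_atTop_mono' _ ?_ hlim
  filter_upwards [eventually_ge_atTop 1] with L hL
  have hL0 : 0 < L := by linarith
  rw [gaussianPDFReal, coe_toNNReal _ (by positivity), rpow_one]
  have hsqrt : √(2 * π * (σ ^ 2 * L / 2)) ≤ √(π * σ ^ 2) * L := by
    rw [Real.sqrt_le_iff, mul_pow, sq_sqrt (by positivity)]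
    have hLL : L ≤ L ^ 2 := by nlinarith
    refine ⟨by positivity, ?_⟩
    nlinarith [mul_le_mul_of_nonneg_left hLL (by positivity : 0 ≤ π * σ ^ 2)]
  have hexp : -(c ^ 2 * L + (2 * c / σ + 1 / σ ^ 2))
      ≤ -(c * σ * L + 1 - 0) ^ 2 / (2 * (σ ^ 2 * L / 2)) := by
    have : (c ^ 2 * L + (2 * c / σ + 1 / σ ^ 2)) * (2 * (σ ^ 2 * L / 2))
        = (c * σ * L + 1) ^ 2 + (L - 1) := by field_simp; ring
    rw [neg_div, neg_le_neg_iff, div_le_iff₀ (by positivity), this, sub_zero]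
    linarith
  calc K * (exp ((1 - c ^ 2) * L) / L)
      = exp L * ((√(π * σ ^ 2) * L)⁻¹ * exp (-(c ^ 2 * L + (2 * c / σ + 1 / σ ^ 2)))) := by
        rw [show (1 - c ^ 2) * L = L + -(c ^ 2 * L) by ring, exp_add, neg_add, exp_add]
        simp only [K, div_eq_mul_inv, mul_inv]
        ring
    _ ≤ _ := by gcongr

lemma tendsto_one_sub_gaussianReal_Ioi_pow_atTop {σ c : ℝ} (hσ : 0 < σ) (hc0 : 0 ≤ c)
    (hc1 : c < 1) :
    Tendsto (fun M : ℕ ↦ (1 - (gaussianReal 0 (σ ^ 2 * log M / 2).toNNReal).real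
      (Ioi (c * σ * log M))) ^ M) atTop (nhds 0) := by
  have hpdf := (tendsto_exp_mul_gaussianPDFReal_atTop (c := c) hσ (by nlinarith)).comp
    (tendsto_log_atTop.comp tendsto_natCast_atTop_atTop)
  refine squeeze_zero' (.of_forall fun M ↦ pow_nonneg (sub_nonneg.2 measureReal_le_one) M) ?_
    (tendsto_exp_atBot.comp (tendsto_neg_atTop_atBot.comp hpdf))
  filter_upwards [eventually_ge_atTop 2] with M hM
  have hM1 : (1 : ℝ) < M := by exact_mod_cast hM
  have hv : (σ ^ 2 * log M / 2).toNNReal ≠ 0 :=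
    (toNNReal_pos.2 (by have := log_pos hM1; positivity)).ne'
  have hp := gaussianPDFReal_add_one_le_gaussianReal_real_Ioi hv
    (by positivity : 0 ≤ c * σ * log M)
  simp only [Function.comp_apply, exp_log (by linarith : (0 : ℝ) < M)]
  set p := (gaussianReal 0 (σ ^ 2 * log M / 2).toNNReal).real (Ioi (c * σ * log M))
  calc (1 - p) ^ M ≤ exp (-p) ^ M :=
        pow_le_pow_left₀ (sub_nonneg.2 measureReal_le_one) (one_sub_le_exp_neg p) M
    _ = exp (-(M * p)) := by rw [← exp_nat_mul, mul_neg]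
    _ ≤ _ := by gcongr

theorem tendsto_kpremSuccess_one {μHat σHat α : ℝ} (hσ : 0 < σHat) {k : ℕ → ℕ}
    (hkα : ∀ M : ℕ, 2 ≤ M → (k M : ℝ) ≤ (M : ℝ) ^ α) (hγ : 1 + √α < μHat / σHat) :
    Tendsto (fun M : ℕ ↦ kpremSuccess μHat σHat (k M) M) atTop (nhds 1) := by
  obtain ⟨c, hc, hcγ⟩ := exists_between (lt_sub_iff_add_lt.2 hγ)
  have hβ₁ : α - (μHat / σHat - c) ^ 2 < 0 :=
    sub_neg.2 ((sqrt_lt' (by linarith [sqrt_nonneg α])).1 (lt_sub_comm.1 hcγ))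
  have hβ₂ : 1 - c ^ 2 < 0 := by nlinarith
  have hlow : ∀ᶠ M : ℕ in atTop,
      1 - ((M : ℝ) ^ (α - (μHat / σHat - c) ^ 2) + (M : ℝ) ^ (1 - c ^ 2))
        ≤ kpremSuccess μHat σHat (k M) M := by
    filter_upwards [eventually_ge_atTop 2] with M hM
    refine le_trans ?_ (one_sub_rpow_le_kpremSuccess (c := c) hσ (by linarith)
      (by linarith [sqrt_nonneg α]) (by omega))
    rw [sub_eq_add_neg α, rpow_add (by positivity)]
    gcongr
    exact hkα M hM
  have hlim := tendsto_const_nhds (x := (1 : ℝ)).sub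
    ((tendsto_natCast_rpow_atTop_zero hβ₁).add (tendsto_natCast_rpow_atTop_zero hβ₂))
  rw [add_zero, sub_zero] at hlim
  exact tendsto_of_tendsto_of_tendsto_of_le_of_le' hlim tendsto_const_nhds hlow
    (.of_forall fun _ ↦ measureReal_le_one)

theorem tendsto_kpremSuccess_zero {μHat σHat : ℝ} (hμ : 0 < μHat) (hσ : 0 < σHat)
    {k : ℕ → ℕ} (hk : ∀ M, 0 < k M) (hγ : μHat / σHat < 1) :
    Tendsto (fun M : ℕ ↦ kpremSuccess μHat σHat (k M) M) atTop (nhds 0) := by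
  obtain ⟨c, hγc, hc⟩ := exists_between hγ
  have hβ : -(c - μHat / σHat) ^ 2 < 0 := neg_neg_of_pos (by nlinarith)
  have hup : ∀ᶠ M : ℕ in atTop,
      kpremSuccess μHat σHat (k M) M ≤ (M : ℝ) ^ (-(c - μHat / σHat) ^ 2)
        + (1 - (gaussianReal 0 (σHat ^ 2 * log M / 2).toNNReal).real
          (Ioi (c * σHat * log M))) ^ M := by
    filter_upwards [eventually_gt_atTop 0] with M hM
    exact kpremSuccess_le_rpow (hk M) hσ hγc.le hM
  have hlim := (tendsto_natCast_rpow_atTop_zero hβ).add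
    (tendsto_one_sub_gaussianReal_Ioi_pow_atTop hσ ((div_pos hμ hσ).trans hγc).le hc)
  rw [add_zero] at hlim
  exact squeeze_zero' (.of_forall fun _ ↦ measureReal_nonneg) hup hlim

theorem stmt9_general (μHat σHat α : ℝ) (hμ : 0 < μHat) (hσ : 0 < σHat)
    (k : ℕ → ℕ)
    (hk1 : ∀ M : ℕ, 1 ≤ k M) (hkα : ∀ M : ℕ, 2 ≤ M → (k M : ℝ) ≤ (M : ℝ) ^ α) :
    (1 + Real.sqrt α < μHat / σHat →
      Tendsto (fun M : ℕ => kpremSuccess μHat σHat (k M) M) atTop (nhds 1)) ∧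
    (μHat / σHat < 1 →
      Tendsto (fun M : ℕ => kpremSuccess μHat σHat (k M) M) atTop (nhds 0)) :=
  ⟨tendsto_kpremSuccess_one hσ hkα, tendsto_kpremSuccess_zero hμ hσ hk1⟩

/-- for the `k`-planted REM with `k ≤ M^α`, `0 < α < 1`:
if `γ = μ̂/σ̂ > 1 + √α` the top-`k` estimator recovers the planted set with
probability `1 − o(1)`; if `γ < 1` it fails with probability `1 − o(1)`. -/
theorem stmt9 (μHat σHat α : ℝ) (hμ : 0 < μHat) (hσ : 0 < σHat)
    (hα0 : 0 < α) (hα1 : α < 1) (k : ℕ → ℕ)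
    (hk1 : ∀ M : ℕ, 1 ≤ k M) (hkα : ∀ M : ℕ, 2 ≤ M → (k M : ℝ) ≤ (M : ℝ) ^ α) :
    (1 + Real.sqrt α < μHat / σHat →
      Tendsto (fun M : ℕ => kpremSuccess μHat σHat (k M) M) atTop (nhds 1)) ∧
    (μHat / σHat < 1 →
      Tendsto (fun M : ℕ => kpremSuccess μHat σHat (k M) M) atTop (nhds 0)) :=
  stmt9_general μHat σHat α hμ hσ k hk1 hkα
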